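/- arXiv:1605.05090 — 7 statements merged into one kernel-verified Lean document; each statement's English description precedes it below -/
import Mathlib

section
/- Let c ∈ ℕ, let G be an arbitrary group, and let L be a Lie algebra with a grading (L_g)_{g∈G} by G with support X. Then L is nilpotent of class at most c if and only if for every abelian subgroup H of G the homogeneous subalgebra L_H := ⊕_{h∈H} L_h of L (which is graded by H with support X ∩ H) is nilpotent of class at most c. -/
/-! ## Arithmetically-free sets -/

/-- The subset `X` of an additive abelian group is arithmetically-free iff it is finite and
for all `x, g ∈ X` the arithmetic progression `{x + n • g : n ∈ ℕ}` is not contained in `X`. -/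
def ArithFree {G : Type*} [AddCommGroup G] (X : Set G) : Prop :=
  X.Finite ∧ ∀ x ∈ X, ∀ g ∈ X, ¬ (∀ n : ℕ, x + n • g ∈ X)

/-- The subset `X` of an arbitrary (multiplicative) group is arithmetically-free iff it is
finite and every subset of `X` of pairwise commuting elements is arithmetically-free (in the
abelian subgroup it generates), i.e. contains no full arithmetic progression
`{x * g ^ n : n ∈ ℕ}` with `x, g` in the subset. -/
def ArithFreeMul {G : Type*} [Group G] (X : Set G) : Prop :=
  X.Finite ∧ ∀ Y ⊆ X, (∀ a ∈ Y, ∀ b ∈ Y, a * b = b * a) →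
    ∀ x ∈ Y, ∀ g ∈ Y, ¬ (∀ n : ℕ, x * g ^ n ∈ Y)

/-! ## Gradings of Lie algebras -/

/-- A grading of a Lie algebra `L` over `F` by a multiplicative group `G`: a family of
subspaces forming an internal direct sum decomposition with `⁅L_g, L_h⁆ ⊆ L_{g*h}`. -/
structure LieGrading (F G L : Type*) [Field F] [Group G] [LieRing L] [LieAlgebra F L] where
  piece : G → Submodule F L
  independent : iSupIndep piece
  iSup_eq_top : ⨆ g, piece g = ⊤
  bracket_mem : ∀ g h : G, ∀ x ∈ piece g, ∀ y ∈ piece h, ⁅x, y⁆ ∈ piece (g * h)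

/-- The support of a grading. -/
def LieGrading.support {F G L : Type*} [Field F] [Group G] [LieRing L] [LieAlgebra F L]
    (gr : LieGrading F G L) : Set G := {g | gr.piece g ≠ ⊥}

/-- A grading of a Lie algebra `L` over `F` by an additive group `G`. -/
structure LieGradingAdd (F G L : Type*) [Field F] [AddGroup G] [LieRing L] [LieAlgebra F L] where
  piece : G → Submodule F L
  independent : iSupIndep piece
  iSup_eq_top : ⨆ g, piece g = ⊤
  bracket_mem : ∀ g h : G, ∀ x ∈ piece g, ∀ y ∈ piece h, ⁅x, y⁆ ∈ piece (g + h)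

/-- The support of an additive grading. -/
def LieGradingAdd.support {F G L : Type*} [Field F] [AddGroup G] [LieRing L] [LieAlgebra F L]
    (gr : LieGradingAdd F G L) : Set G := {g | gr.piece g ≠ ⊥}

/-! ## The generalised Higman map -/

/-- `f(α,λ) := λ · α ^ λ`. -/
def fmap (a l : ℕ) : ℕ := l * a ^ l

/-- `f_n(1,λ) := n` and `f_n(α+1,λ) := λ · (f_n(α,λ) + n)`. -/
def fseq (n : ℕ) : ℕ → ℕ → ℕ
  | 0, _ => n
  | 1, _ => n
  | (a + 2), l => l * (fseq n (a + 1) l + n)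

/-- The recursively defined maps `H_a(b,c)`: `H_a(1,c) = 1`, `H_a(b,1) = a` and, for `b,c > 1`,
`H_a(b,c) = max { a·f(c, a + H_a(b-1, a·f(c-1, H_a(b,c-1))) + 1), H_a(b-1,c), H_a(b,c-1) }`. -/
def Hrec (a : ℕ) : ℕ → ℕ → ℕ
  | 0, _ => 1
  | 1, _ => 1
  | _ + 2, 0 => a
  | _ + 2, 1 => a
  | b + 2, c + 2 =>
      max (a * fmap (c + 2) (a + Hrec a (b + 1) (a * fmap (c + 1) (Hrec a (b + 2) (c + 1))) + 1))
        (max (Hrec a (b + 1) (c + 2)) (Hrec a (b + 2) (c + 1)))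
  termination_by b c => (b, c)

/-- The generalised Higman map `H(n) := H_n(n,n)`. -/
def HigmanMap (n : ℕ) : ℕ := Hrec n n n

/-! ## Left-associated brackets, Lie monomials and Lie-regularity -/

/-- The left-associated bracket `[x₁, x₂, …, x_k]` of a list of elements of a Lie ring
(with the junk value `0` for the empty list). -/
def foldBracket {L : Type*} [LieRing L] : List L → L
  | [] => 0
  | x :: xs => xs.foldl (fun acc y => ⁅acc, y⁆) x

/-- A bracketed Lie monomial in the generators `v_1, …, v_l` (a full binary bracketing with
leaves labelled by generators). -/
inductive LieTree (l : ℕ) : Type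
  | leaf : Fin l → LieTree l
  | node : LieTree l → LieTree l → LieTree l

/-- The list of leaves of a bracketed Lie monomial. -/
def LieTree.leaves {l : ℕ} : LieTree l → List (Fin l)
  | .leaf i => [i]
  | .node s t => s.leaves ++ t.leaves

/-- The evaluation of a bracketed Lie monomial in a Lie ring. -/
def LieTree.eval {l : ℕ} {L : Type*} [LieRing L] (v : Fin l → L) : LieTree l → L
  | .leaf i => v i
  | .node s t => ⁅s.eval v, t.eval v⁆

/-- A sequence `(a_1, …, a_l)` on a totally ordered set `A` is Lie-regular iff there are
`k, m ∈ ℕ` with `k ≥ 1`, a bracketed Lie monomial `P` in which each of the generators `v_1, …, v_l` of the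
free Lie algebra on `u_1, …, u_k, v_1, …, v_l, w_1, …, w_m` occurs exactly once, a set
`S_P` of permutations of `{1, …, l}` containing the identity, and a sign map `ε : S_P → {±1}`
with `ε(id) = 1`, such that the linearisation identity
`[u_1,…,u_k, P, w_1,…,w_m] = Σ_{π ∈ S_P} ε(π)·[u_1,…,u_k, v_{π(1)},…,v_{π(l)}, w_1,…,w_m]`
holds in the free Lie algebra, and `(a_1,…,a_l)` is lexicographically strictly smaller than
`(a_{π(1)},…,a_{π(l)})` for every `π ∈ S_P` other than the identity. -/
def IsLieRegular {A : Type*} [LinearOrder A] (a : List A) : Prop :=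
  ∃ (k m : ℕ) (P : LieTree a.length)
    (SP : Finset (Equiv.Perm (Fin a.length))) (ε : Equiv.Perm (Fin a.length) → ℤ),
      1 ≤ k ∧
      P.leaves.Perm (List.finRange a.length) ∧
      (1 : Equiv.Perm (Fin a.length)) ∈ SP ∧ ε 1 = 1 ∧ (∀ π ∈ SP, ε π = 1 ∨ ε π = -1) ∧
      (∀ π ∈ SP, π ≠ 1 → List.Lex (· < ·) a (List.ofFn fun i => a.get (π i))) ∧
      (let u : Fin k → FreeLieAlgebra ℤ (Fin k ⊕ Fin a.length ⊕ Fin m) :=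
        fun i => FreeLieAlgebra.of ℤ (Sum.inl i)
      let v : Fin a.length → FreeLieAlgebra ℤ (Fin k ⊕ Fin a.length ⊕ Fin m) :=
        fun i => FreeLieAlgebra.of ℤ (Sum.inr (Sum.inl i))
      let w : Fin m → FreeLieAlgebra ℤ (Fin k ⊕ Fin a.length ⊕ Fin m) :=
        fun i => FreeLieAlgebra.of ℤ (Sum.inr (Sum.inr i))
      foldBracket (List.ofFn u ++ [P.eval v] ++ List.ofFn w) =
        ∑ π ∈ SP, ε π • foldBracket
          (List.ofFn u ++ List.ofFn (fun i => v (π i)) ++ List.ofFn w))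

/-! ## Words over an alphabet, regularity, fullness -/

/-- `Wn A n` is the `n`-fold iterated set of finite sequences: `W⁰(A) := A` and
`W^{n+1}(A) := W(W^n(A))`, where `W(B)` is the set of finite sequences (lists) on `B`. -/
def Wn (A : Type u) : ℕ → Type u
  | 0 => A
  | n + 1 => List (Wn A n)

/-- An element of `W^{n+1}(A)` is (definitionally) a list of elements of `W^n(A)`. -/
def Wn.toList {A : Type u} {n : ℕ} (S : Wn A (n + 1)) : List (Wn A n) := S

/-- The lexicographically extended linear orders on the `Wn A n`. -/
def WnOrder (A : Type u) [LinearOrder A] : ∀ n : ℕ, LinearOrder (Wn A n)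
  | 0 => inferInstanceAs (LinearOrder A)
  | n + 1 => letI := WnOrder A n; (inferInstance : LinearOrder (List (Wn A n)))

instance instWnOrder (A : Type u) [LinearOrder A] (n : ℕ) : LinearOrder (Wn A n) := WnOrder A n

/-- All elements of `W⁰(A) = A` have the same type; two elements of `W^{n+1}(A)` have the
same type iff their first entries coincide. -/
def SameTypeW (A : Type u) [LinearOrder A] : ∀ n : ℕ, Wn A n → Wn A n → Prop
  | 0, _, _ => True
  | n + 1, S, T => S.toList.head? = T.toList.head?

/-- Regular elements: every element of `W⁰(A) = A` is regular; an element `(x_1,…,x_k)` of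
`W^{n+1}(A)` is regular iff all `x_i` are regular of the same type and there is `1 ≤ l < k`
with `x_1 = ⋯ = x_l` strictly smaller than each of `x_{l+1}, …, x_k`. -/
def IsRegularW (A : Type u) [LinearOrder A] : ∀ n : ℕ, Wn A n → Prop
  | 0, _ => True
  | n + 1, S =>
      (∀ x ∈ S.toList, IsRegularW A n x) ∧
      (∀ x ∈ S.toList, ∀ y ∈ S.toList, SameTypeW A n x y) ∧
      ∃ (x : Wn A n) (l : ℕ) (xs : List (Wn A n)),
        1 ≤ l ∧ xs ≠ [] ∧ S.toList = List.replicate l x ++ xs ∧ ∀ y ∈ xs, x < y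

/-- The underlying sequence (iterated flattening) of an element of `W^n(A)`. -/
def flattenW (A : Type u) : ∀ n : ℕ, Wn A n → List A
  | 0, a => [a]
  | n + 1, S => (S.toList.map (flattenW A n)).flatten

/-- The span `σ(S) := {0, ω(a_1), ω(a_1)+ω(a_2), …, ω(a_1)+⋯+ω(a_k)}` of a finite sequence. -/
def spanOf {A : Type u} {G : Type*} [AddCommGroup G] (ω : A → G) (S : List A) : Set G :=
  {g | ∃ n ≤ S.length, g = ((S.take n).map ω).sum}

/-- `α(S) := ω⁻¹(X) ∩ {a_1, …, a_k}`. -/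
def alphaOf {A : Type u} {G : Type*} [AddCommGroup G] (ω : A → G) (X : Set G)
    (S : List A) : Set A :=
  (ω ⁻¹' X) ∩ {a | a ∈ S}

/-- `M` can be translated into `X` iff `h + M ⊆ X` for some `h`. -/
def TranslatesInto {G : Type*} [AddCommGroup G] (M X : Set G) : Prop :=
  ∃ h : G, ∀ m ∈ M, h + m ∈ X

/-- A finite sequence `S` on the alphabet `(A, <, ω, X)` is full iff (1) its span cannot be
translated into `X`, or (2) some consecutive segment `T` of `S` is the underlying sequence of
a regular element of `W^*(A)` and has weight `ω₁(T) ∈ G \ X`. -/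
def IsFull {A : Type u} {G : Type*} [LinearOrder A] [AddCommGroup G] (ω : A → G)
    (X : Set G) (S : List A) : Prop :=
  (¬ TranslatesInto (spanOf ω S) X) ∨
    ∃ T : List A, T <:+: S ∧
      (∃ (n : ℕ) (R : Wn A n), IsRegularW A n R ∧ flattenW A n R = T) ∧
      (T.map ω).sum ∉ X

/-- A derivation of `S ∈ W(A)` is a regular element `T ∈ W²(A)` whose underlying sequence is
a consecutive segment of `S`. -/
def IsDerivation {A : Type u} [LinearOrder A] (S : List A) (T : Wn A 2) : Prop :=
  IsRegularW A 2 T ∧ (flattenW A 2 T) <:+: S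

/-- A hyper-derivation of `S` is a derivation whose span (with respect to the weight `ω₁` of
the shifted alphabet) has strictly smaller cardinality than the span of `S`. -/
def IsHyperDerivation {A : Type u} {G : Type*} [LinearOrder A] [AddCommGroup G] (ω : A → G)
    (S : List A) (T : Wn A 2) : Prop :=
  IsDerivation S T ∧
    (spanOf (fun s : List A => (s.map ω).sum) T.toList).ncard < (spanOf ω S).ncard

/-!
If `x ∈ L_g` and `y ∈ L_h` with `gh ≠ hg`, then `⁅x, y⁆ ∈ L_{gh} ∩ L_{hg} = 0`. Combined with
the Leibniz rule this shows that a right-normed bracket of homogeneous elements vanishes as soon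
as two of its degrees do not commute. Since `L^{c+1}` is spanned by such brackets of length
`c + 1`, only those whose degrees generate an abelian subgroup `H` survive, and these lie in
`L_H^{c+1}`.
-/

theorem LieSubalgebra.coe_mem_lowerCentralSeries {R L : Type*} [CommRing R] [LieRing L]
    [LieAlgebra R L] (K : LieSubalgebra R L) {k : ℕ} {x : K}
    (hx : x ∈ LieModule.lowerCentralSeries R K K k) :
    (x : L) ∈ LieModule.lowerCentralSeries R L L k :=
  LieIdeal.map_lowerCentralSeries_le k (LieIdeal.mem_map (f := K.incl) hx)

theorem lie_mem_of_mem_span {R L : Type*} [CommRing R] [LieRing L] [LieAlgebra R L]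
    {s t : Set L} {P : Submodule R L} (hst : ∀ x ∈ s, ∀ y ∈ t, ⁅x, y⁆ ∈ P) {x y : L}
    (hx : x ∈ Submodule.span R s) (hy : y ∈ Submodule.span R t) : ⁅x, y⁆ ∈ P := by
  have hle : Submodule.map₂ (LieModule.toEnd R L L : L →ₗ[R] L →ₗ[R] L)
      (Submodule.span R s) (Submodule.span R t) ≤ P := by
    rw [Submodule.map₂_span_span, Submodule.span_le]
    rintro _ ⟨x, hx, y, hy, rfl⟩
    exact hst x hx y hy
  exact hle (Submodule.apply_mem_map₂ _ hx hy)

namespace LieGrading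

variable {F G L : Type*} [Field F] [Group G] [LieRing L] [LieAlgebra F L]
  (gr : LieGrading F G L)

theorem eq_zero_of_mem_piece_of_ne {g h : G} (hgh : g ≠ h) {x : L} (hg : x ∈ gr.piece g)
    (hh : x ∈ gr.piece h) : x = 0 :=
  Submodule.disjoint_def.mp (gr.independent.pairwiseDisjoint hgh) x hg hh

theorem lie_eq_zero_of_not_commute {g h : G} (hgh : g * h ≠ h * g) {x y : L}
    (hx : x ∈ gr.piece g) (hy : y ∈ gr.piece h) : ⁅x, y⁆ = 0 := by
  refine gr.eq_zero_of_mem_piece_of_ne hgh (gr.bracket_mem g h x hx y hy) ?_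
  rw [← lie_skew]
  exact neg_mem (gr.bracket_mem h g y hy x hx)

theorem lie_mem_iSup_piece (H : Subgroup G) {x y : L}
    (hx : x ∈ ⨆ h ∈ (H : Set G), gr.piece h) (hy : y ∈ ⨆ h ∈ (H : Set G), gr.piece h) :
    ⁅x, y⁆ ∈ ⨆ h ∈ (H : Set G), gr.piece h := by
  rw [Submodule.iSup_eq_span' gr.piece (· ∈ (H : Set G))] at hx hy ⊢
  refine lie_mem_of_mem_span ?_ hx hy
  simp only [Set.mem_iUnion, SetLike.mem_coe]
  rintro x ⟨g, hg, hx⟩ y ⟨h, hh, hy⟩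
  exact Submodule.subset_span
    (Set.mem_iUnion₂.2 ⟨g * h, mul_mem hg hh, gr.bracket_mem g h x hx y hy⟩)

def homogeneousSubalgebra (H : Subgroup G) : LieSubalgebra F L where
  toSubmodule := ⨆ h ∈ (H : Set G), gr.piece h
  lie_mem' := gr.lie_mem_iSup_piece H

theorem piece_le_homogeneousSubalgebra {H : Subgroup G} {h : G} (hh : h ∈ H) :
    gr.piece h ≤ (gr.homogeneousSubalgebra H).toSubmodule :=
  le_iSup₂ (f := fun h (_ : h ∈ (H : Set G)) => gr.piece h) h hh

inductive IsHomogeneousWord : ℕ → Set G → G → L → Prop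
  | piece {g : G} {x : L} : x ∈ gr.piece g → IsHomogeneousWord 0 {g} g x
  | lie {k : ℕ} {S : Set G} {g h : G} {x y : L} :
      y ∈ gr.piece h → IsHomogeneousWord k S g x →
        IsHomogeneousWord (k + 1) (insert h S) (h * g) ⁅y, x⁆

variable {gr}

theorem IsHomogeneousWord.mem_piece {k : ℕ} {S : Set G} {g : G} {x : L}
    (hx : gr.IsHomogeneousWord k S g x) : x ∈ gr.piece g := by
  induction hx with
  | piece hx => exact hx
  | lie hy _ ih => exact gr.bracket_mem _ _ _ hy _ ih

theorem IsHomogeneousWord.lie_eq_zero_of_notMem_centralizer {k : ℕ} {S : Set G} {g : G} {x : L}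
    (hx : gr.IsHomogeneousWord k S g x) (hS : ∀ a ∈ S, ∀ b ∈ S, a * b = b * a)
    {h : G} {z : L} (hz : z ∈ gr.piece h) (hh : h ∉ Subgroup.centralizer S) : ⁅z, x⁆ = 0 := by
  induction hx generalizing h z with
  | piece hx =>
    refine gr.lie_eq_zero_of_not_commute (fun hc => hh ?_) hz hx
    simp [Subgroup.mem_centralizer_iff, hc]
  | @lie k S g p x y hy hx ih =>
    have hS' : ∀ a ∈ S, ∀ b ∈ S, a * b = b * a := fun a ha b hb =>
      hS a (Set.mem_insert_of_mem _ ha) b (Set.mem_insert_of_mem _ hb)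
    have hp : p ∈ Subgroup.centralizer S := Subgroup.mem_centralizer_iff.2 fun b hb =>
      hS b (Set.mem_insert_of_mem _ hb) p (Set.mem_insert _ _)
    by_cases hhS : h ∈ Subgroup.centralizer S
    -- Then `h` fails to commute only with `p`, so `⁅z, y⁆ = 0` and the Leibniz rule puts
    -- `⁅z, ⁅y, x⁆⁆` both in `L_{hpg}` and in `L_{phg}`.
    · have hhp : h * p ≠ p * h := fun hc => hh <| Subgroup.mem_centralizer_iff.2 fun b hb => by
        rcases hb with rfl | hb
        · exact hc.symm
        · exact Subgroup.mem_centralizer_iff.1 hhS b hb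
      have hswap : ⁅z, ⁅y, x⁆⁆ = ⁅y, ⁅z, x⁆⁆ := by
        rw [leibniz_lie, gr.lie_eq_zero_of_not_commute hhp hz hy, zero_lie, zero_add]
      refine gr.eq_zero_of_mem_piece_of_ne (g := h * (p * g)) (h := p * (h * g)) ?_
        (gr.bracket_mem _ _ _ hz _ (gr.bracket_mem _ _ _ hy _ hx.mem_piece)) ?_
      · rw [← mul_assoc, ← mul_assoc]
        exact fun e => hhp (mul_right_cancel e)
      · rw [hswap]
        exact gr.bracket_mem _ _ _ hy _ (gr.bracket_mem _ _ _ hz _ hx.mem_piece)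
    · have hhp : h * p ∉ Subgroup.centralizer S := fun h' =>
        hhS (by simpa using mul_mem h' (inv_mem hp))
      rw [leibniz_lie, ih hS' hz hhS, lie_zero, ih hS' (gr.bracket_mem _ _ _ hz _ hy) hhp,
        add_zero]

theorem IsHomogeneousWord.eq_zero_of_not_pairwise_commute {k : ℕ} {S : Set G} {g : G} {x : L}
    (hx : gr.IsHomogeneousWord k S g x) (hS : ¬ ∀ a ∈ S, ∀ b ∈ S, a * b = b * a) : x = 0 := by
  induction hx with
  | piece => exact (hS (by simp)).elim
  | @lie k S g p x y hy hx ih =>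
    by_cases hS' : ∀ a ∈ S, ∀ b ∈ S, a * b = b * a
    · refine hx.lie_eq_zero_of_notMem_centralizer hS' hy fun hp => hS ?_
      have hp' := Subgroup.mem_centralizer_iff.1 hp
      rintro a (rfl | ha) b (rfl | hb)
      · rfl
      · exact (hp' b hb).symm
      · exact hp' a ha
      · exact hS' a ha b hb
    · rw [ih hS', lie_zero]

theorem IsHomogeneousWord.mem_lowerCentralSeries {k : ℕ} {S : Set G} {g : G} {x : L}
    (hx : gr.IsHomogeneousWord k S g x) (K : LieSubalgebra F L)
    (hK : ∀ s ∈ S, gr.piece s ≤ K.toSubmodule) :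
    ∃ hxK : x ∈ K, (⟨x, hxK⟩ : K) ∈ LieModule.lowerCentralSeries F K K k := by
  induction hx with
  | piece hx => exact ⟨hK _ rfl hx, by simp⟩
  | @lie k S g p x y hy hx ih =>
    obtain ⟨hxK, hmem⟩ := ih fun s hs => hK s (Set.mem_insert_of_mem _ hs)
    have hyK : y ∈ K := hK p (Set.mem_insert _ _) hy
    refine ⟨K.lie_mem hyK hxK, ?_⟩
    rw [LieModule.lowerCentralSeries_succ]
    exact LieSubmodule.lie_mem_lie (LieSubmodule.mem_top (⟨y, hyK⟩ : K)) hmem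

variable (gr)

theorem lowerCentralSeries_le_span_isHomogeneousWord (k : ℕ) :
    (LieModule.lowerCentralSeries F L L k).toSubmodule ≤
      Submodule.span F {x | ∃ S g, gr.IsHomogeneousWord k S g x} := by
  have hspan : Submodule.span F (⋃ g, (gr.piece g : Set L)) = ⊤ := by
    rw [← Submodule.iSup_eq_span, gr.iSup_eq_top]
  induction k with
  | zero =>
    rw [LieModule.lowerCentralSeries_zero, LieSubmodule.top_toSubmodule, ← hspan]
    exact Submodule.span_mono (Set.iUnion_subset fun g x hx => ⟨{g}, g, .piece hx⟩)
  | succ k ih =>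
    rw [LieModule.lowerCentralSeries_succ, LieSubmodule.lieIdeal_oper_eq_linear_span',
      Submodule.span_le]
    rintro _ ⟨y, -, x, hx, rfl⟩
    refine lie_mem_of_mem_span ?_ (hspan.symm ▸ Submodule.mem_top) (ih hx)
    rintro y hy x ⟨S, g, hx⟩
    obtain ⟨h, hy⟩ := Set.mem_iUnion.1 hy
    exact Submodule.subset_span ⟨_, _, .lie hy hx⟩

end LieGrading

/-- A Lie algebra graded by a group `G` is nilpotent of class at most `c`
iff for every abelian subgroup `H` of `G` the homogeneous subalgebra
`L_H = ⊕_{h ∈ H} L_h` (graded by `H` with support `X ∩ H`) is nilpotent of class at most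
`c`. -/
theorem lie_grading_nilpotent_iff_abelian_subgroups
    {F G L : Type*} [Field F] [Group G] [LieRing L] [LieAlgebra F L]
    (gr : LieGrading F G L) (c : ℕ) :
    LieModule.lowerCentralSeries F L L c = ⊥ ↔
      ∀ H : Subgroup G, (∀ a ∈ H, ∀ b ∈ H, a * b = b * a) →
        ∀ K : LieSubalgebra F L, (K.toSubmodule = ⨆ h ∈ (H : Set G), gr.piece h) →
          LieModule.lowerCentralSeries F K K c = ⊥ := by
  constructor
  · intro hL H _ K _
    refine (LieSubmodule.eq_bot_iff _).2 fun x hx => Subtype.ext ?_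
    simpa [hL] using K.coe_mem_lowerCentralSeries hx
  · intro hsub
    rw [← LieSubmodule.toSubmodule_eq_bot, eq_bot_iff]
    refine (gr.lowerCentralSeries_le_span_isHomogeneousWord c).trans
      (Submodule.span_eq_bot.2 ?_).le
    rintro x ⟨S, g, hx⟩
    by_cases hS : ∀ a ∈ S, ∀ b ∈ S, a * b = b * a
    · set H := Subgroup.closure S
      have := Subgroup.isMulCommutative_closure hS
      have hH : ∀ a ∈ H, ∀ b ∈ H, a * b = b * a := fun _ ha _ hb => setLike_mul_comm ha hb
      obtain ⟨hxK, hmem⟩ := hx.mem_lowerCentralSeries (gr.homogeneousSubalgebra H)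
        fun _ hs => gr.piece_le_homogeneousSubalgebra (Subgroup.subset_closure hs)
      rw [hsub H hH _ rfl] at hmem
      exact congrArg Subtype.val ((LieSubmodule.mem_bot _).1 hmem)
    · exact hx.eq_zero_of_not_pairwise_commute hS
end

section
/- Let (L_g)_{g∈G} be a grading of a Lie algebra L by a group (G,+) with support X, and let f : X → Y be a contraction of X onto a subset Y of a group (H,+). Then setting L^y := ⊕_{x ∈ f⁻¹(y)} L_x for y ∈ Y and L^h := 0 for h ∈ H \ Y defines a grading of L by (H,+) with support Y. -/
/-! Regrouping the independent pieces `L_x` along the pairwise disjoint fibres of `f` on the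
support keeps them independent and spanning. For the bracket it suffices to look at homogeneous
`u ∈ L_a`, `v ∈ L_b` with `a, b` in the support: either `a + b` lies outside the support, and then
`⁅u, v⁆ ∈ L_{a+b} = 0`, or it lies inside, and additivity of `f` on the support gives
`f (a + b) = f a + f b`. -/

open Function in
theorem iSupIndep.biSup_of_pairwiseDisjoint {α ι κ : Type*} [CompleteLattice α]
    [IsModularLattice α] [IsCompactlyGenerated α] {t : ι → α} (ht : iSupIndep t)
    {S : κ → Set ι} (hS : Pairwise (Disjoint on S)) :
    iSupIndep fun k => ⨆ i ∈ S k, t i := by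
  intro k
  have hdisj : Disjoint (S k) (⋃ (j) (_ : j ≠ k), S j) :=
    Set.disjoint_iUnion₂_right.mpr fun j hj => hS hj.symm
  refine (ht.disjoint_biSup_biSup hdisj).mono_right ?_
  simp only [iSup_iUnion, le_refl]

theorem lie_mem_of_mem_biSup {R L ι κ : Type*} [CommRing R] [LieRing L] [LieAlgebra R L]
    {p : ι → Submodule R L} {q : κ → Submodule R L} {r : Submodule R L} {S : Set ι} {T : Set κ}
    (h : ∀ a ∈ S, ∀ b ∈ T, ∀ x ∈ p a, ∀ y ∈ q b, ⁅x, y⁆ ∈ r) {x : L}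
    (hx : x ∈ ⨆ a ∈ S, p a) {y : L} (hy : y ∈ ⨆ b ∈ T, q b) : ⁅x, y⁆ ∈ r := by
  let B : L →ₗ[R] L →ₗ[R] L := (LieModule.toEnd R L L : L →ₗ[R] Module.End R L)
  have hB : Submodule.map₂ B (⨆ a ∈ S, p a) (⨆ b ∈ T, q b) ≤ r := by
    simp only [Submodule.map₂_iSup_left, Submodule.map₂_iSup_right, iSup_le_iff,
      Submodule.map₂_le]
    intro b hb a ha x hx y hy
    exact h a ha b hb x hx y hy
  exact hB (Submodule.apply_mem_map₂ B hx hy)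

/-- `f` is a contraction of `X` onto `f '' X`. -/
def IsContraction {G H : Type*} [AddGroup G] [AddGroup H] (X : Set G) (f : G → H) : Prop :=
  ∀ x₁ ∈ X, ∀ x₂ ∈ X, ∀ x₃ ∈ X, x₁ + x₂ = x₃ → f x₁ + f x₂ = f x₃

namespace LieGradingAdd

variable {F G H L : Type*} [Field F] [AddGroup G] [LieRing L] [LieAlgebra F L]
  (gr : LieGradingAdd F G L) (f : G → H)

theorem biSup_support_eq_top : ⨆ x ∈ gr.support, gr.piece x = ⊤ :=
  iSup_subtype'.trans ((iSup_ne_bot_subtype gr.piece).trans gr.iSup_eq_top)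

def contractedPiece (h : H) : Submodule F L :=
  ⨆ x ∈ {x ∈ gr.support | f x = h}, gr.piece x

variable {gr} in
theorem piece_le_contractedPiece {x : G} (hx : x ∈ gr.support) :
    gr.piece x ≤ gr.contractedPiece f (f x) :=
  le_biSup gr.piece (⟨hx, rfl⟩ : x ∈ {y ∈ gr.support | f y = f x})

theorem iSupIndep_contractedPiece : iSupIndep (gr.contractedPiece f) :=
  gr.independent.biSup_of_pairwiseDisjoint fun _ _ hne =>
    Set.disjoint_left.mpr fun _ hx hx' => hne (hx.2.symm.trans hx'.2)

theorem iSup_contractedPiece : ⨆ h, gr.contractedPiece f h = ⊤ :=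
  eq_top_iff.mpr <| gr.biSup_support_eq_top.symm.le.trans <|
    iSup₂_le fun x hx => (piece_le_contractedPiece f hx).trans (le_iSup _ (f x))

variable [AddGroup H]

variable {f} in
theorem lie_mem_contractedPiece (hf : IsContraction gr.support f) (g h : H) :
    ∀ x ∈ gr.contractedPiece f g, ∀ y ∈ gr.contractedPiece f h,
      ⁅x, y⁆ ∈ gr.contractedPiece f (g + h) := by
  intro x hx y hy
  refine lie_mem_of_mem_biSup (fun a ha b hb u hu v hv => ?_) hx hy
  have huv := gr.bracket_mem a b u hu v hv
  by_cases hab : a + b ∈ gr.support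
  · have hfab : f (a + b) = g + h := by rw [← hf a ha.1 b hb.1 _ hab rfl, ha.2, hb.2]
    exact hfab ▸ piece_le_contractedPiece f hab huv
  · rw [not_not.mp hab, Submodule.mem_bot] at huv
    rw [huv]
    exact zero_mem _

def contraction {f : G → H} (hf : IsContraction gr.support f) : LieGradingAdd F H L where
  piece := gr.contractedPiece f
  independent := gr.iSupIndep_contractedPiece f
  iSup_eq_top := gr.iSup_contractedPiece f
  bracket_mem := gr.lie_mem_contractedPiece hf

variable {f} in
theorem support_contraction (hf : IsContraction gr.support f) :
    (gr.contraction hf).support = f '' gr.support := by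
  ext h
  simp [support, contraction, contractedPiece, and_comm]

end LieGradingAdd

/-- If `(L_g)_{g ∈ G}` is a grading of `L` by `(G,+)` with support `X` and
`f` is a contraction of `X` onto `Y ⊆ (H,+)`, then `L^y := ⊕_{x ∈ f⁻¹(y)} L_x` for `y ∈ Y`
and `L^h := 0` for `h ∈ H \ Y` defines a grading of `L` by `(H,+)` with support `Y`. -/
theorem lie_grading_contraction
    {F G H L : Type*} [Field F] [AddGroup G] [AddGroup H] [LieRing L] [LieAlgebra F L]
    (gr : LieGradingAdd F G L) (Y : Set H) (f : G → H)
    (hsurj : f '' gr.support = Y)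
    (hadd : ∀ x₁ ∈ gr.support, ∀ x₂ ∈ gr.support, ∀ x₃ ∈ gr.support,
      x₁ + x₂ = x₃ → f x₁ + f x₂ = f x₃) :
    ∃ gr' : LieGradingAdd F H L,
      (∀ h : H, gr'.piece h = ⨆ x ∈ {x ∈ gr.support | f x = h}, gr.piece x) ∧
      gr'.support = Y := by
  exact ⟨gr.contraction hadd, fun _ => rfl, hsurj ▸ gr.support_contraction hadd⟩
end

section
/- Let G be a finitely generated abelian group (so G ≅ ℤ^m ⊕ F with m ∈ ℕ and F a finite abelian group) and let X be an arithmetically-free subset of G. Then there exists a group homomorphism π : G → H to a finite abelian group H such that π(X) is an arithmetically-free subset of H. -/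
/-! For each pair `x, g ∈ X` fix `n` with `x + n • g ∉ X`. The finitely many differences
`x + n • g - y` with `y ∈ X` are nonzero, and a homomorphism `π` that kills none of them keeps
`π x + n • π g` outside `π '' X`. A finitely generated abelian group is a product of copies of `ℤ`
and a finite group, so every nonzero element survives in some finite quotient; taking products,
so do finitely many of them at once. -/

theorem Int.cast_zmod_natAbs_succ_ne_zero {c : ℤ} (hc : c ≠ 0) :
    (c : ZMod (c.natAbs + 1)) ≠ 0 := by
  rw [Ne, ZMod.intCast_zmod_eq_zero_iff_dvd]
  intro h
  have := Nat.le_of_dvd (Int.natAbs_pos.mpr hc) (Int.natAbs_dvd_natAbs.mpr h)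
  omega

open scoped DirectSum in
theorem AddGroup.FG.exists_finite_addMonoidHom_ne_zero {G : Type*} [AddCommGroup G]
    [AddGroup.FG G] {g : G} (hg : g ≠ 0) :
    ∃ (H : Type) (_ : AddCommGroup H) (_ : Finite H) (π : G →+ H), π g ≠ 0 := by
  obtain ⟨n, ι, _, p, hp, e, ⟨f⟩⟩ := AddCommGroup.equiv_free_prod_directSum_zmod G
  by_cases htors : (f g).2 = 0
  · obtain ⟨i, hi⟩ : ∃ i, (f g).1 i ≠ 0 := by
      by_contra! hfree
      exact hg (f.map_eq_zero_iff.mp (Prod.ext (Finsupp.ext hfree) htors))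
    refine ⟨ZMod (((f g).1 i).natAbs + 1), inferInstance, inferInstance,
      (Int.castAddHom _).comp ((Finsupp.applyAddHom i).comp
        ((AddMonoidHom.fst _ _).comp f.toAddMonoidHom)), ?_⟩
    simpa using Int.cast_zmod_natAbs_succ_ne_zero hi
  · have (i : ι) : NeZero (p i ^ e i) := ⟨pow_ne_zero _ (hp i).ne_zero⟩
    have : Finite (⨁ i : ι, ZMod (p i ^ e i)) :=
      Finite.of_injective _ DFunLike.coe_injective
    exact ⟨_, inferInstance, inferInstance, (AddMonoidHom.snd _ _).comp f.toAddMonoidHom, htors⟩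

theorem exists_finite_addMonoidHom_forall_ne_zero {G : Type*} [AddGroup G]
    (hG : ∀ g : G, g ≠ 0 → ∃ (H : Type) (_ : AddCommGroup H) (_ : Finite H) (π : G →+ H),
      π g ≠ 0)
    {D : Set G} (hD : D.Finite) (hD0 : 0 ∉ D) :
    ∃ (H : Type) (_ : AddCommGroup H) (_ : Finite H) (π : G →+ H), ∀ d ∈ D, π d ≠ 0 := by
  induction D, hD using Set.Finite.induction_on with
  | empty => exact ⟨Unit, inferInstance, inferInstance, 0, by simp⟩
  | @insert a s _ _ ih =>
    obtain ⟨H, _, _, π, hπ⟩ := ih fun h => hD0 (Set.mem_insert_of_mem a h)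
    obtain ⟨H', _, _, π', hπ'⟩ := hG a fun h => hD0 (h ▸ Set.mem_insert a s)
    refine ⟨H × H', inferInstance, inferInstance, π.prod π', ?_⟩
    rintro d (rfl | hd) h
    · exact hπ' (congrArg Prod.snd h)
    · exact hπ d hd (congrArg Prod.fst h)

theorem ArithFree.exists_finite_forall_arithFree_image {G : Type*} [AddCommGroup G]
    {X : Set G} (hX : ArithFree X) :
    ∃ D : Set G, D.Finite ∧ 0 ∉ D ∧
      ∀ {H : Type*} [AddCommGroup H] (π : G →+ H), (∀ d ∈ D, π d ≠ 0) → ArithFree (π '' X) := by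
  have : Finite X := hX.1.to_subtype
  have hescape (p : X × X) : ∃ n : ℕ, (p.1 : G) + n • (p.2 : G) ∉ X := by
    by_contra! h
    exact hX.2 p.1 p.1.2 p.2 p.2.2 h
  choose n hn using hescape
  refine ⟨Set.range fun q : X × X × X => q.1 + n (q.1, q.2.1) • (q.2.1 : G) - q.2.2,
    Set.finite_range _, ?_, fun π hπ => ⟨hX.1.image π, ?_⟩⟩
  · rintro ⟨⟨x, g, y⟩, hxy⟩
    exact hn (x, g) (by rw [sub_eq_zero.mp hxy]; exact y.2)
  · rintro _ ⟨x, hx, rfl⟩ _ ⟨g, hg, rfl⟩ hprog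
    obtain ⟨y, hy, hπy⟩ := hprog (n (⟨x, hx⟩, ⟨g, hg⟩))
    refine hπ _ ⟨(⟨x, hx⟩, ⟨g, hg⟩, ⟨y, hy⟩), rfl⟩ ?_
    simp [hπy]

/-- If `G` is a finitely generated abelian group and `X` an
arithmetically-free subset of `G`, then there is a homomorphism `π : G → H` to a finite
abelian group `H` such that `π(X)` is arithmetically-free. -/
theorem arithFree_image_of_fg
    {G : Type*} [AddCommGroup G] [AddGroup.FG G] (X : Set G) (hX : ArithFree X) :
    ∃ (H : Type) (_ : AddCommGroup H) (_ : Finite H) (π : G →+ H),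
      ArithFree (π '' X) := by
  obtain ⟨D, hD, hD0, himage⟩ := hX.exists_finite_forall_arithFree_image
  obtain ⟨H, _, _, π, hπ⟩ := exists_finite_addMonoidHom_forall_ne_zero
    (fun _ => AddGroup.FG.exists_finite_addMonoidHom_ne_zero) hD hD0
  exact ⟨H, inferInstance, inferInstance, π, himage π hπ⟩
end

section
/- Let L be a Lie algebra over a field F with a grading (L_g)_{g∈G} by an abelian group G whose support X is arithmetically-free. Then there exist a finite abelian group H and a grading of L by H whose support Y is arithmetically-free and satisfies |Y| ≤ |X|. -/
/-! The support `X` lies in the finitely generated subgroup `A` it generates. For each pair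
`x, g ∈ X` pick a point `x + n • g` of the progression outside `X`; together with `X` these form
a finite set `S ⊆ A`. Finitely generated abelian groups are residually finite, so some
homomorphism `φ` from `A` to a finite group is injective on `S`. Coarsening the grading along `φ`
gives a grading with support `φ '' X`, of size at most `|X|`, and it is arithmetically-free since
every chosen escape point `x + n • g` is still sent outside `φ '' X`. -/

section ArithFree

variable {G H : Type*} [AddCommGroup G] [AddCommGroup H] {X : Set G}

theorem ArithFree.preimage (hX : ArithFree X) (f : H →+ G) (hf : Function.Injective f) :
    ArithFree (f ⁻¹' X) := by
  refine ⟨hX.1.preimage hf.injOn, fun x hx g hg hall => hX.2 (f x) hx (f g) hg fun n => ?_⟩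
  simpa using hall n

theorem ArithFree.exists_finite_escape (hX : ArithFree X) :
    ∃ S : Set G, S.Finite ∧ X ⊆ S ∧ ∀ x ∈ X, ∀ g ∈ X, ∃ n : ℕ, x + n • g ∈ S \ X := by
  have hescape : ∀ x g : G, ∃ n : ℕ, x ∈ X → g ∈ X → x + n • g ∉ X := by
    intro x g
    by_cases hxg : x ∈ X ∧ g ∈ X
    · obtain ⟨n, hn⟩ := not_forall.1 (hX.2 x hxg.1 g hxg.2)
      exact ⟨n, fun _ _ => hn⟩
    · exact ⟨0, fun hx hg => absurd ⟨hx, hg⟩ hxg⟩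
  choose n hn using hescape
  refine ⟨X ∪ (fun p : G × G => p.1 + n p.1 p.2 • p.2) '' X ×ˢ X,
    hX.1.union ((hX.1.prod hX.1).image _), Set.subset_union_left, fun x hx g hg => ?_⟩
  exact ⟨n x g, Or.inr ⟨(x, g), ⟨hx, hg⟩, rfl⟩, hn x g hx hg⟩

theorem arithFree_image_of_injOn {S : Set G} (hX : X.Finite) (hXS : X ⊆ S)
    (hS : ∀ x ∈ X, ∀ g ∈ X, ∃ n : ℕ, x + n • g ∈ S \ X) (φ : G →+ H) (hφ : S.InjOn φ) :
    ArithFree (φ '' X) := by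
  refine ⟨hX.image φ, ?_⟩
  rintro _ ⟨x, hx, rfl⟩ _ ⟨g, hg, rfl⟩ hall
  obtain ⟨n, hnS, hnX⟩ := hS x hx g hg
  obtain ⟨y, hy, hφy⟩ := hall n
  rw [← map_nsmul, ← map_add] at hφy
  exact hnX (hφ (hXS hy) hnS hφy ▸ hy)

end ArithFree

theorem ZMod.intCast_injOn_two_mul_natAbs_lt (N : ℕ) :
    Set.InjOn (Int.cast : ℤ → ZMod N) {z | 2 * z.natAbs < N} := by
  intro a (ha : 2 * a.natAbs < N) b (hb : 2 * b.natAbs < N) hab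
  have hdvd : (N : ℤ) ∣ b - a := (ZMod.intCast_eq_intCast_iff_dvd_sub a b N).1 hab
  have hsmall : |b - a| < N := by rw [Int.abs_eq_natAbs]; omega
  linarith [Int.eq_zero_of_abs_lt_dvd hdvd hsmall]

theorem exists_addMonoidHom_finite_injOn {A : Type*} [AddCommGroup A] [AddGroup.FG A]
    {S : Set A} (hS : S.Finite) :
    ∃ (H : Type) (_ : AddCommGroup H) (_ : Finite H) (φ : A →+ H), S.InjOn φ := by
  classical
  obtain ⟨n, ι, _, p, hp, e, ⟨f⟩⟩ := AddCommGroup.equiv_free_prod_directSum_zmod A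
  have : ∀ i, NeZero (p i ^ e i) := fun i => ⟨pow_ne_zero _ (hp i).ne_zero⟩
  have : Finite (DirectSum ι fun i => ZMod (p i ^ e i)) :=
    inferInstanceAs (Finite (Π₀ i, ZMod (p i ^ e i)))
  obtain ⟨M, hM⟩ : ∃ M, ∀ s ∈ S, ∀ i, ((f s).1 i).natAbs ≤ M :=
    ⟨_, fun s hs i => (hS.biUnion fun s _ => Set.finite_range fun i => ((f s).1 i).natAbs)
      |>.bddAbove.choose_spec (Set.mem_biUnion hs ⟨i, rfl⟩)⟩
  have : NeZero (2 * M + 1) := ⟨by omega⟩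
  -- Reducing modulo `2 * M + 1` is injective on the free coordinates of points of `S`.
  let reduce : (Fin n →₀ ℤ) →+ (Fin n → ZMod (2 * M + 1)) :=
    AddMonoidHom.pi fun i => (Int.castAddHom _).comp (Finsupp.applyAddHom i)
  refine ⟨_, inferInstance, inferInstance,
    (reduce.prodMap (AddMonoidHom.id _)).comp f.toAddMonoidHom, fun x hx y hy hxy => ?_⟩
  obtain ⟨hfree, htorsion⟩ := Prod.ext_iff.1 hxy
  refine f.injective (Prod.ext (Finsupp.ext fun i => ?_) htorsion)
  exact ZMod.intCast_injOn_two_mul_natAbs_lt (2 * M + 1)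
    (Nat.lt_succ_of_le (Nat.mul_le_mul_left 2 (hM x hx i)))
    (Nat.lt_succ_of_le (Nat.mul_le_mul_left 2 (hM y hy i))) (congrFun hfree i)

namespace LieGradingAdd

variable {F G H L : Type*} [Field F] [AddCommGroup G] [AddCommGroup H] [LieRing L]
  [LieAlgebra F L]

def restrict (gr : LieGradingAdd F G L) (A : AddSubgroup G) (hA : gr.support ⊆ A) :
    LieGradingAdd F A L where
  piece a := gr.piece a
  independent := gr.independent.comp Subtype.val_injective
  iSup_eq_top := by
    refine eq_top_iff.2 (gr.iSup_eq_top.ge.trans (iSup_le fun g => ?_))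
    by_cases hg : g ∈ gr.support
    · exact le_iSup_of_le ⟨g, hA hg⟩ le_rfl
    · exact (not_not.1 hg).le.trans bot_le
  bracket_mem a b := gr.bracket_mem a b

theorem support_restrict (gr : LieGradingAdd F G L) (A : AddSubgroup G) (hA : gr.support ⊆ A) :
    (gr.restrict A hA).support = Subtype.val ⁻¹' gr.support :=
  rfl

def map (gr : LieGradingAdd F G L) (φ : G →+ H) : LieGradingAdd F H L where
  piece h := ⨆ g : φ ⁻¹' {h}, gr.piece g
  independent h := by
    dsimp only
    rw [iSup_subtype'']
    refine (gr.independent.disjoint_biSup_biSup (t := {g | φ g ≠ h})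
      (Set.disjoint_left.2 fun g hg hg' => hg' hg)).mono_right ?_
    exact iSup₂_le fun h' hh' => iSup_le fun g => le_biSup gr.piece (g.2.trans_ne hh')
  iSup_eq_top := by
    refine eq_top_iff.2 (gr.iSup_eq_top.ge.trans (iSup_le fun g => ?_))
    exact le_iSup_of_le (φ g) (le_iSup_of_le ⟨g, rfl⟩ le_rfl)
  bracket_mem a b x hx y hy := by
    refine Submodule.iSup_induction _ (motive := fun x => ⁅x, y⁆ ∈ _) hx ?_ (by simp)
      fun x x' hx hx' => by rw [add_lie]; exact add_mem hx hx'
    rintro ⟨g, rfl : φ g = a⟩ x hx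
    refine Submodule.iSup_induction _ (motive := fun y => ⁅x, y⁆ ∈ _) hy ?_ (by simp)
      fun y y' hy hy' => by rw [lie_add]; exact add_mem hy hy'
    rintro ⟨g', rfl : φ g' = b⟩ y hy
    exact Submodule.mem_iSup_of_mem ⟨g + g', map_add φ g g'⟩ (gr.bracket_mem g g' x hx y hy)

theorem support_map (gr : LieGradingAdd F G L) (φ : G →+ H) :
    (gr.map φ).support = φ '' gr.support := by
  ext h
  simp [support, map, iSup_eq_bot, and_comm]

end LieGradingAdd

/-- If a Lie algebra `L` over `F` is graded by an abelian group `G` with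
arithmetically-free support `X`, then there is a finite abelian group `H` and a grading of
`L` by `H` whose support `Y` is arithmetically-free and satisfies `|Y| ≤ |X|`. -/
theorem lie_grading_finite_abelian_support
    {F G L : Type*} [Field F] [AddCommGroup G] [LieRing L] [LieAlgebra F L]
    (gr : LieGradingAdd F G L) (hX : ArithFree gr.support) :
    ∃ (H : Type) (_ : AddCommGroup H) (_ : Finite H) (gr' : LieGradingAdd F H L),
      ArithFree gr'.support ∧ gr'.support.ncard ≤ gr.support.ncard := by
  let A := AddSubgroup.closure gr.support
  have : Finite gr.support := hX.1.to_subtype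
  let grA := gr.restrict A AddSubgroup.subset_closure
  have hXA : ArithFree grA.support := by
    rw [LieGradingAdd.support_restrict]
    exact hX.preimage A.subtype Subtype.val_injective
  obtain ⟨S, hSfin, hXS, hescape⟩ := hXA.exists_finite_escape
  obtain ⟨H, _, hH, φ, hφ⟩ := exists_addMonoidHom_finite_injOn hSfin
  refine ⟨H, inferInstance, hH, grA.map φ, ?_, ?_⟩
  · rw [LieGradingAdd.support_map]
    exact arithFree_image_of_injOn hXA.1 hXS hescape φ hφ
  · have hncard : grA.support.ncard = gr.support.ncard := by
      rw [LieGradingAdd.support_restrict]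
      exact Set.ncard_preimage_of_injective_subset_range Subtype.val_injective
        fun x hx => ⟨⟨x, AddSubgroup.subset_closure hx⟩, rfl⟩
    rw [LieGradingAdd.support_map, ← hncard]
    exact Set.ncard_image_le hXA.1
end

section
/- Let Y be a finite subset of a group (G,*) that is NOT arithmetically-free, and let F be a field. Then the standard filiform Lie algebra Lf over F admits a grading by G whose support Y₀ is a subset of Y. -/
/-- `L` is a standard filiform Lie algebra over `F`: it has a basis `v, w_1, w_2, …`
(indexed by `Option ℕ`, with `none ↦ v` and `some i ↦ w_{i+1}`) satisfying
`⁅v, w_i⁆ = w_{i+1}` and `⁅w_j, w_k⁆ = 0`. -/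
def IsStandardFiliform (F L : Type*) [Field F] [LieRing L] [LieAlgebra F L] : Prop :=
  ∃ b : Module.Basis (Option ℕ) F L,
    (∀ i : ℕ, ⁅b none, b (some i)⁆ = b (some (i + 1))) ∧
    (∀ i j : ℕ, ⁅b (some i), b (some j)⁆ = 0)

open Submodule

namespace Module.Basis

variable {R M ι κ : Type*} [Semiring R] [AddCommMonoid M] [Module R M]

theorem iSupIndep_span_image_fiber (b : Basis ι R M) (d : ι → κ) :
    iSupIndep fun k => span R (b '' (d ⁻¹' {k})) := fun k =>
  (b.linearIndependent.disjoint_span_image (disjoint_compl_right (a := d ⁻¹' {k}))).mono_right <|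
    iSup₂_le fun _ hj => span_mono <| Set.image_mono fun _ hi hk => hj (hi.symm.trans hk)

theorem iSup_span_image_fiber (b : Basis ι R M) (d : ι → κ) :
    ⨆ k, span R (b '' (d ⁻¹' {k})) = ⊤ :=
  eq_top_iff.2 <| b.span_eq.ge.trans <| span_le.2 <| by
    rintro _ ⟨i, rfl⟩
    exact le_iSup (fun k => span R (b '' (d ⁻¹' {k}))) (d i) (subset_span ⟨i, rfl, rfl⟩)

end Module.Basis

section ofBasis

variable {F G L ι : Type*} [Field F] [Group G] [LieRing L] [LieAlgebra F L]

def LieGrading.ofBasis (b : Module.Basis ι F L) (d : ι → G)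
    (hb : ∀ i j, ⁅b i, b j⁆ ∈ span F (b '' (d ⁻¹' {d i * d j}))) : LieGrading F G L where
  piece g := span F (b '' (d ⁻¹' {g}))
  independent := b.iSupIndep_span_image_fiber d
  iSup_eq_top := b.iSup_span_image_fiber d
  bracket_mem g h x hx y hy := by
    have hspan : map₂ (LieModule.toEnd F L L : L →ₗ[F] Module.End F L)
        (span F (b '' (d ⁻¹' {g}))) (span F (b '' (d ⁻¹' {h}))) ≤
        span F (b '' (d ⁻¹' {g * h})) := by
      rw [map₂_span_span, span_le]
      rintro _ ⟨_, ⟨i, rfl, rfl⟩, _, ⟨j, rfl, rfl⟩, rfl⟩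
      exact hb i j
    exact hspan (apply_mem_map₂ _ hx hy)

theorem LieGrading.support_ofBasis_subset (b : Module.Basis ι F L) (d : ι → G)
    (hb : ∀ i j, ⁅b i, b j⁆ ∈ span F (b '' (d ⁻¹' {d i * d j}))) :
    (LieGrading.ofBasis b d hb).support ⊆ Set.range d := by
  intro g hg
  by_contra hgd
  have hfiber : d ⁻¹' {g} = ∅ := Set.eq_empty_of_forall_notMem fun i hi => hgd ⟨i, hi⟩
  exact hg (by simp [LieGrading.ofBasis, hfiber])

end ofBasis

theorem exists_commute_progression_of_not_arithFreeMul {G : Type*} [Group G] {Y : Set G}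
    (hYfin : Y.Finite) (hY : ¬ ArithFreeMul Y) :
    ∃ x g : G, Commute g x ∧ g ∈ Y ∧ ∀ n : ℕ, x * g ^ n ∈ Y := by
  have hsub := mt (And.intro hYfin) hY
  push Not at hsub
  obtain ⟨Y', hY'Y, hcomm, x, hx, g, hg, hprog⟩ := hsub
  exact ⟨x, g, hcomm g hg x hx, hY'Y hg, fun n => hY'Y (hprog n)⟩

/-- With `v` of degree `g` and `w_{i+1}` of degree `x * g ^ i`, the relation
`⁅v, w_i⁆ = w_{i+1}` is homogeneous exactly because `g` and `x` commute. -/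
theorem IsStandardFiliform.exists_lieGrading_support_subset {F G L : Type*} [Field F] [Group G]
    [LieRing L] [LieAlgebra F L] (hL : IsStandardFiliform F L) {x g : G} (hgx : Commute g x) :
    ∃ gr : LieGrading F G L, gr.support ⊆ insert g (Set.range fun n : ℕ => x * g ^ n) := by
  obtain ⟨b, hvw, hww⟩ := hL
  let d : Option ℕ → G := fun o => o.elim g fun n => x * g ^ n
  have hb : ∀ i j, ⁅b i, b j⁆ ∈ span F (b '' (d ⁻¹' {d i * d j})) := by
    rintro (_ | i) (_ | j)
    · simp
    · rw [hvw j]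
      refine subset_span ⟨some (j + 1), ?_, rfl⟩
      show x * g ^ (j + 1) = g * (x * g ^ j)
      rw [pow_succ', ← mul_assoc, ← mul_assoc, hgx.eq]
    · rw [← lie_skew, hvw i]
      refine neg_mem (subset_span ⟨some (i + 1), ?_, rfl⟩)
      show x * g ^ (i + 1) = x * g ^ i * g
      rw [pow_succ, mul_assoc]
    · simp [hww i j]
  exact ⟨LieGrading.ofBasis b d hb,
    (LieGrading.support_ofBasis_subset b d hb).trans (Option.range_elim g _).le⟩

/-- If a finite subset `Y` of a group `(G,*)` is not arithmetically-free,
then the standard filiform Lie algebra over `F` admits a grading by `G` whose support is a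
subset of `Y`. -/
theorem standardFiliform_grading_of_not_arithFree
    {F G L : Type*} [Field F] [Group G] [LieRing L] [LieAlgebra F L]
    (hL : IsStandardFiliform F L)
    (Y : Set G) (hYfin : Y.Finite) (hY : ¬ ArithFreeMul Y) :
    ∃ gr : LieGrading F G L, gr.support ⊆ Y := by
  obtain ⟨x, g, hgx, hg, hprog⟩ := exists_commute_progression_of_not_arithFreeMul hYfin hY
  obtain ⟨gr, hgr⟩ := hL.exists_lieGrading_support_subset hgx
  exact ⟨gr, hgr.trans (Set.insert_subset hg (Set.range_subset_iff.2 hprog))⟩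
end

section
/- Let X be a finite subset of an arbitrary group (G,*) and let F be a field. Then X is arithmetically-free if and only if the standard filiform Lie algebra Lf over F admits no grading by G whose support is contained in X. -/
/-!
A grading of the filiform algebra with support in `X` produces a progression in `X`. Some
homogeneous `y ∈ L_g` has a nonzero `v`-coordinate, and since the support is finite while `L` is
infinite-dimensional, some piece `L_d` meets the abelian ideal spanned by the `w_i` nontrivially,
say in `z ≠ 0`. On that ideal `ad y` is a nonzero multiple of the injective shift
`w_i ↦ w_{i+1}`, so `(ad y)ⁿ z` is a nonzero element of `L_{gⁿd}`: hence `gⁿd ∈ X` for all `n`,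
and `g`, `d` commute because `[y, z]` lies in both `L_{gd}` and `L_{dg}`. Conversely, commuting
`x, g` with `x gⁿ ∈ X` for all `n` give the grading `deg v = g`, `deg w_{n+1} = x gⁿ`.
-/

theorem arithFreeMul_iff {G : Type*} [Group G] (X : Set G) :
    ArithFreeMul X ↔
      X.Finite ∧ ∀ x ∈ X, ∀ g ∈ X, Commute x g → ¬ ∀ n : ℕ, x * g ^ n ∈ X := by
  refine and_congr_right fun _ => ⟨?_,
    fun h Y hYX hY x hx g hg hprog => h x (hYX hx) g (hYX hg) (hY x hx g hg) fun n => hYX (hprog n)⟩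
  intro h x hx g hg hxg hprog
  let Y := insert g (Set.range fun n : ℕ => x * g ^ n)
  have hY_of : ∀ a ∈ Y, ∀ b, Commute x b → Commute g b → Commute a b := by
    simp only [Y, Set.forall_mem_insert, Set.forall_mem_range]
    exact ⟨fun b _ hgb => hgb, fun n b hxb hgb => hxb.mul_left (hgb.pow_left n)⟩
  have hY_comm : ∀ a ∈ Y, ∀ b ∈ Y, Commute a b := fun a ha b hb =>
    hY_of a ha b (hY_of b hb x (Commute.refl x) hxg.symm).symm
      (hY_of b hb g hxg (Commute.refl g)).symm
  refine h Y ?_ (fun a ha b hb => (hY_comm a ha b hb).eq) x (Or.inr ⟨0, by simp⟩) g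
    (Set.mem_insert g _) fun n => Or.inr ⟨n, rfl⟩
  simpa [Y, Set.insert_subset_iff, Set.range_subset_iff] using ⟨hg, hprog⟩

theorem Submodule.exists_mem_ne_zero_apply_eq_zero_of_not_finite {R M N : Type*} [Ring R]
    [AddCommGroup M] [Module R M] [AddCommGroup N] [Module R N] [IsNoetherian R N]
    {p : Submodule R M} (hp : ¬ Module.Finite R p) (f : M →ₗ[R] N) :
    ∃ x ∈ p, x ≠ 0 ∧ f x = 0 := by
  by_contra! h
  refine hp (Module.Finite.of_injective (f.domRestrict p) ?_)
  rw [injective_iff_map_eq_zero]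
  rintro ⟨x, hx⟩ hfx
  by_contra hx0
  exact h x hx (by simpa using hx0) (by simpa using hfx)

namespace LieGrading

variable {F G L : Type*} [Field F] [Group G] [LieRing L] [LieAlgebra F L]

theorem mem_support_of_mem_piece (gr : LieGrading F G L) {g : G} {x : L}
    (hx : x ∈ gr.piece g) (hx0 : x ≠ 0) : g ∈ gr.support :=
  fun hbot => hx0 ((Submodule.eq_bot_iff _).mp hbot x hx)

theorem commute_of_lie_ne_zero (gr : LieGrading F G L) {g h : G} {x y : L}
    (hx : x ∈ gr.piece g) (hy : y ∈ gr.piece h) (hxy : ⁅x, y⁆ ≠ 0) : Commute g h := by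
  by_contra hgh
  have hyx : ⁅x, y⁆ ∈ gr.piece (h * g) := by
    rw [← lie_skew]
    exact neg_mem (gr.bracket_mem h g y hy x hx)
  exact hxy (Submodule.disjoint_def.mp (gr.independent.pairwiseDisjoint hgh) _
    (gr.bracket_mem g h x hx y hy) hyx)

theorem exists_mem_piece_apply_ne_zero {M : Type*} [AddCommGroup M] [Module F M]
    (gr : LieGrading F G L) {f : L →ₗ[F] M} (hf : f ≠ 0) :
    ∃ g, ∃ x ∈ gr.piece g, f x ≠ 0 := by
  by_contra! h
  apply hf
  rw [← LinearMap.ker_eq_top, eq_top_iff, ← gr.iSup_eq_top]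
  exact iSup_le fun g x hx => h g x hx

theorem exists_not_finite_piece (gr : LieGrading F G L) (hfin : gr.support.Finite)
    (hL : ¬ Module.Finite F L) : ∃ g, ¬ Module.Finite F (gr.piece g) := by
  by_contra! h
  apply hL
  have htop : ⨆ g ∈ hfin.toFinset, gr.piece g = ⊤ := by
    rw [eq_top_iff, ← gr.iSup_eq_top]
    refine iSup_le fun g => ?_
    by_cases hg : g ∈ gr.support
    · exact le_biSup gr.piece (hfin.mem_toFinset.mpr hg)
    · rw [not_not.mp hg]
      exact bot_le
  rw [Module.finite_def, ← htop]
  exact Submodule.fg_biSup _ _ fun g _ => Module.Finite.iff_fg.mp (h g)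

noncomputable def ofBasis_s7 {ι : Type*} (b : Module.Basis ι F L) (deg : ι → G)
    (hdeg : ∀ i j, ⁅b i, b j⁆ ∈ Submodule.span F (b '' (deg ⁻¹' {deg i * deg j}))) :
    LieGrading F G L where
  piece g := Submodule.span F (b '' (deg ⁻¹' {g}))
  independent := by
    refine iSupIndep_def.mpr fun g =>
      (b.linearIndependent.disjoint_span_image (t := deg ⁻¹' {g}ᶜ)
        (disjoint_compl_right.preimage deg)).mono_right ?_
    exact iSup₂_le fun h hne => Submodule.span_mono
      (Set.image_mono fun i (hi : deg i = h) => show deg i ≠ g from hi ▸ hne)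
  iSup_eq_top := by
    rw [eq_top_iff, ← b.span_eq, Submodule.span_le]
    rintro _ ⟨i, rfl⟩
    exact Submodule.mem_iSup_of_mem (deg i) (Submodule.subset_span ⟨i, rfl, rfl⟩)
  bracket_mem g h := by
    let ad : L →ₗ[F] L →ₗ[F] L := LieAlgebra.ad F L
    suffices Submodule.map₂ ad (Submodule.span F (b '' (deg ⁻¹' {g})))
        (Submodule.span F (b '' (deg ⁻¹' {h}))) ≤ Submodule.span F (b '' (deg ⁻¹' {g * h})) from
      fun x hx y hy => this (Submodule.apply_mem_map₂ ad hx hy)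
    rw [Submodule.map₂_span_span, Submodule.span_le]
    rintro _ ⟨_, ⟨i, hi, rfl⟩, _, ⟨j, hj, rfl⟩, rfl⟩
    rw [Set.mem_preimage, Set.mem_singleton_iff] at hi hj
    simpa [ad, hi, hj] using hdeg i j

theorem support_ofBasis_subset_s7 {ι : Type*} (b : Module.Basis ι F L) (deg : ι → G)
    (hdeg : ∀ i j, ⁅b i, b j⁆ ∈ Submodule.span F (b '' (deg ⁻¹' {deg i * deg j}))) :
    (ofBasis_s7 b deg hdeg).support ⊆ Set.range deg := by
  intro g hg
  by_contra hng
  have hempty : deg ⁻¹' {g} = ∅ := Set.eq_empty_of_forall_notMem fun i hi => hng ⟨i, hi⟩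
  exact hg (by simp [ofBasis_s7, hempty])

end LieGrading

section Filiform

variable {F L : Type*} [Field F] [LieRing L] [LieAlgebra F L] (b : Module.Basis (Option ℕ) F L)

noncomputable def filiformShift : L →ₗ[F] L :=
  b.constr F fun i => i.elim 0 fun j => b (some (j + 1))

theorem coord_none_comp_filiformShift : b.coord none ∘ₗ filiformShift b = 0 := by
  refine b.ext fun i => ?_
  cases i <;> simp [filiformShift, Module.Basis.constr_basis]

theorem coord_some_succ_comp_filiformShift (j : ℕ) :
    b.coord (some (j + 1)) ∘ₗ filiformShift b = b.coord (some j) := by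
  refine b.ext fun i => ?_
  cases i <;> simp [filiformShift, Module.Basis.constr_basis, Finsupp.single_apply]

theorem filiformShift_ne_zero {z : L} (hz : z ≠ 0) (hcz : b.coord none z = 0) :
    filiformShift b z ≠ 0 := by
  intro hsz
  refine hz (b.forall_coord_eq_zero_iff.mp ?_)
  rintro (_ | j)
  · exact hcz
  · rw [← coord_some_succ_comp_filiformShift, LinearMap.comp_apply, hsz, map_zero]

variable {b}

theorem lie_eq_filiformShift (hv : ∀ i : ℕ, ⁅b none, b (some i)⁆ = b (some (i + 1)))
    (hw : ∀ i j : ℕ, ⁅b (some i), b (some j)⁆ = 0) (x y : L) :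
    ⁅x, y⁆ = b.coord none x • filiformShift b y - b.coord none y • filiformShift b x := by
  let B : L →ₗ[F] L →ₗ[F] L := (b.coord none).smulRight (filiformShift b)
  suffices (LieAlgebra.ad F L : L →ₗ[F] L →ₗ[F] L) = B - B.flip from
    by simpa [B] using LinearMap.congr_fun₂ this x y
  refine LinearMap.ext_basis b b fun i j => ?_
  rcases i with _ | i <;> rcases j with _ | j <;>
    simp [B, filiformShift, Module.Basis.constr_basis, hv, hw, ← lie_skew _ (b none)]

theorem coord_none_lie (hv : ∀ i : ℕ, ⁅b none, b (some i)⁆ = b (some (i + 1)))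
    (hw : ∀ i j : ℕ, ⁅b (some i), b (some j)⁆ = 0) (x y : L) : b.coord none ⁅x, y⁆ = 0 := by
  have hc (z : L) : b.coord none (filiformShift b z) = 0 :=
    LinearMap.congr_fun (coord_none_comp_filiformShift b) z
  rw [lie_eq_filiformShift hv hw, map_sub, map_smul, map_smul, hc, hc, smul_zero, smul_zero,
    sub_zero]

theorem lie_ne_zero_of_coord_none (hv : ∀ i : ℕ, ⁅b none, b (some i)⁆ = b (some (i + 1)))
    (hw : ∀ i j : ℕ, ⁅b (some i), b (some j)⁆ = 0) {y z : L} (hcy : b.coord none y ≠ 0)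
    (hz : z ≠ 0) (hcz : b.coord none z = 0) : ⁅y, z⁆ ≠ 0 := by
  rw [lie_eq_filiformShift hv hw, hcz, zero_smul, sub_zero]
  exact smul_ne_zero hcy (filiformShift_ne_zero b hz hcz)

end Filiform

section StandardFiliformGrading

variable {F G L : Type*} [Field F] [Group G] [LieRing L] [LieAlgebra F L]

theorem LieGrading.exists_commute_mul_pow_mem_support (hL : IsStandardFiliform F L)
    (gr : LieGrading F G L) (hfin : gr.support.Finite) :
    ∃ x ∈ gr.support, ∃ g ∈ gr.support, Commute x g ∧ ∀ n : ℕ, x * g ^ n ∈ gr.support := by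
  obtain ⟨b, hv, hw⟩ := hL
  have hc : b.coord none ≠ 0 := fun h => by simpa using LinearMap.congr_fun h (b none)
  obtain ⟨g, y, hy, hcy⟩ := gr.exists_mem_piece_apply_ne_zero hc
  have hinf : ¬ Module.Finite F L := fun _ => not_finite_iff_infinite.mpr inferInstance
    (Module.Finite.finite_basis b)
  obtain ⟨d, hd⟩ := gr.exists_not_finite_piece hfin hinf
  obtain ⟨z, hz, hz0, hcz⟩ := Submodule.exists_mem_ne_zero_apply_eq_zero_of_not_finite hd
    (b.coord none)
  have hprog (n : ℕ) : ∃ z ∈ gr.piece (g ^ n * d), z ≠ 0 ∧ b.coord none z = 0 := by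
    induction n with
    | zero => exact ⟨z, by simpa using hz, hz0, hcz⟩
    | succ n ih =>
      obtain ⟨z, hz, hz0, hcz⟩ := ih
      refine ⟨⁅y, z⁆, ?_, lie_ne_zero_of_coord_none hv hw hcy hz0 hcz, coord_none_lie hv hw y z⟩
      rw [pow_succ', mul_assoc]
      exact gr.bracket_mem _ _ y hy z hz
  have hgd : Commute g d :=
    gr.commute_of_lie_ne_zero hy hz (lie_ne_zero_of_coord_none hv hw hcy hz0 hcz)
  have hy0 : y ≠ 0 := fun h => hcy (by rw [h, map_zero])
  refine ⟨d, gr.mem_support_of_mem_piece hz hz0, g, gr.mem_support_of_mem_piece hy hy0, hgd.symm,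
    fun n => ?_⟩
  obtain ⟨z, hz, hz0, -⟩ := hprog n
  rw [(hgd.symm.pow_right n).eq]
  exact gr.mem_support_of_mem_piece hz hz0

theorem exists_lieGrading_support_subset_of_commute (hL : IsStandardFiliform F L) {x g : G}
    (hxg : Commute x g) :
    ∃ gr : LieGrading F G L, gr.support ⊆ insert g (Set.range fun n : ℕ => x * g ^ n) := by
  obtain ⟨b, hv, hw⟩ := hL
  let deg : Option ℕ → G := fun i => i.elim g fun n => x * g ^ n
  have hmem (k : Option ℕ) {h : G} (hk : deg k = h) :
      b k ∈ Submodule.span F (b '' (deg ⁻¹' {h})) :=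
    Submodule.subset_span ⟨k, hk, rfl⟩
  have hdeg (i j : Option ℕ) :
      ⁅b i, b j⁆ ∈ Submodule.span F (b '' (deg ⁻¹' {deg i * deg j})) := by
    rcases i with _ | i <;> rcases j with _ | j
    · simp
    · rw [hv j]
      refine hmem (some (j + 1)) ?_
      simp [deg, pow_succ', ← mul_assoc, hxg.eq]
    · rw [← lie_skew, hv i]
      refine neg_mem (hmem (some (i + 1)) ?_)
      simp [deg, pow_succ, mul_assoc]
    · simp [hw]
  refine ⟨LieGrading.ofBasis_s7 b deg hdeg, (LieGrading.support_ofBasis_subset_s7 b deg hdeg).trans ?_⟩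
  rintro _ ⟨_ | n, rfl⟩
  exacts [Set.mem_insert g _, Or.inr ⟨n, rfl⟩]

end StandardFiliformGrading

/-- A finite subset `X` of an arbitrary group `(G,*)` is
arithmetically-free iff the standard filiform Lie algebra over `F` admits no grading by `G`
whose support is contained in `X`. -/
theorem arithFree_iff_no_standardFiliform_grading
    {F G L : Type*} [Field F] [Group G] [LieRing L] [LieAlgebra F L]
    (hL : IsStandardFiliform F L) (X : Set G) (hXfin : X.Finite) :
    ArithFreeMul X ↔ ¬ ∃ gr : LieGrading F G L, gr.support ⊆ X := by
  rw [arithFreeMul_iff, and_iff_right hXfin]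
  constructor
  · rintro hfree ⟨gr, hsupp⟩
    obtain ⟨x, hx, g, hg, hxg, hprog⟩ :=
      gr.exists_commute_mul_pow_mem_support hL (hXfin.subset hsupp)
    exact hfree x (hsupp hx) g (hsupp hg) hxg fun n => hsupp (hprog n)
  · rintro hno x - g hg hxg hprog
    obtain ⟨gr, hgr⟩ := exists_lieGrading_support_subset_of_commute hL hxg
    refine hno ⟨gr, hgr.trans ?_⟩
    simpa [Set.insert_subset_iff, Set.range_subset_iff] using ⟨hg, hprog⟩
end

section
/- Let 𝒜 = (A,<,ω,X) be an alphabet and let ℬ = (W(A),<₁,ω₁,X) be its shift. Let S be a finite sequence on A and let T be a derivation of S. If T is full with respect to ℬ, then S is full with respect to 𝒜. -/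
/-!
Everything in the shift `ℬ` is a word over `W(A)`, and flattening one level turns it into the
corresponding word over `A`. Flattening turns prefix weights of `T` into prefix weights of `S`
(shifted by the weight of the part of `S` before `T`), so a translate of `σ(S)` inside `X`
yields one of `σ₁(T)`. It also turns a regular element of `Wⁿ(W(A))` whose underlying
sequence is a segment of `T` into a regular element of `Wⁿ⁺¹(A)`: the entries of `T` are
regular of one common type because `T` is regular, and lexicographic comparison is
preserved. Weights are preserved since `ω₁` is additive over concatenation.
-/

section Span

variable {A G : Type*} [AddCommGroup G]

theorem mem_spanOf_iff {ω : A → G} {S : List A} {g : G} :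
    g ∈ spanOf ω S ↔ ∃ P, P <+: S ∧ (P.map ω).sum = g := by
  constructor
  · rintro ⟨n, -, rfl⟩
    exact ⟨S.take n, List.take_prefix n S, rfl⟩
  · rintro ⟨P, hP, rfl⟩
    exact ⟨P.length, hP.length_le, by rw [← List.prefix_iff_eq_take.1 hP]⟩

theorem sum_map_flatten (ω : A → G) (L : List (List A)) :
    (L.flatten.map ω).sum = (L.map fun s => (s.map ω).sum).sum := by
  simp [List.map_flatten, List.sum_flatten, Function.comp_def]

theorem spanOf_subset_spanOf_flatten (ω : A → G) (L : List (List A)) :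
    spanOf (fun s => (s.map ω).sum) L ⊆ spanOf ω L.flatten := by
  intro g hg
  obtain ⟨P, hP, rfl⟩ := mem_spanOf_iff.1 hg
  exact mem_spanOf_iff.2 ⟨P.flatten, hP.flatten, sum_map_flatten ω P⟩

theorem TranslatesInto.of_add_mem {M N X : Set G} (c : G) (hMN : ∀ m ∈ M, c + m ∈ N)
    (hN : TranslatesInto N X) : TranslatesInto M X := by
  obtain ⟨h, hh⟩ := hN
  exact ⟨h + c, fun m hm => by simpa only [add_assoc] using hh _ (hMN m hm)⟩

theorem TranslatesInto.mono {M N X : Set G} (hMN : M ⊆ N) (hN : TranslatesInto N X) :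
    TranslatesInto M X :=
  hN.of_add_mem 0 fun m hm => by simpa only [zero_add] using hMN hm

theorem TranslatesInto.spanOf_of_infix {ω : A → G} {S T : List A} {X : Set G}
    (hTS : T <:+: S) (hS : TranslatesInto (spanOf ω S) X) : TranslatesInto (spanOf ω T) X := by
  obtain ⟨P, Q, rfl⟩ := hTS
  refine hS.of_add_mem (P.map ω).sum fun g hg => ?_
  obtain ⟨R, hR, rfl⟩ := mem_spanOf_iff.1 hg
  refine mem_spanOf_iff.2 ⟨P ++ R, ?_, by rw [List.map_append, List.sum_append]⟩
  exact ((List.prefix_append_right_inj P).2 hR).trans (List.prefix_append _ Q)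

end Span

section Shift

variable {A : Type*}

theorem flattenW_one (s : Wn A 1) : flattenW A 1 s = s :=
  List.flatMap_singleton' (s : List A)

theorem flattenW_two (T : Wn A 2) : flattenW A 2 T = (T.toList : List (List A)).flatten := by
  show ((T.toList.map (flattenW A 1)).flatten) = _
  rw [show flattenW A 1 = id from funext flattenW_one]
  exact congrArg List.flatten (List.map_id _)

def Wn.ofShift : ∀ n : ℕ, Wn (List A) n → Wn A (n + 1)
  | 0, R => R
  | n + 1, R => (R.toList.map (Wn.ofShift n) : List (Wn A (n + 1)))

theorem flattenW_ofShift : ∀ (n : ℕ) (R : Wn (List A) n),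
    flattenW A (n + 1) (Wn.ofShift n R) = (flattenW (List A) n R).flatten
  | 0, R => (flattenW_one (A := A) R).trans (List.append_nil _).symm
  | n + 1, R => by
    show ((R.toList.map (Wn.ofShift n)).map (flattenW A (n + 1))).flatten
        = ((R.toList.map (flattenW (List A) n)).flatten).flatten
    simp only [List.map_map, Function.comp_def, flattenW_ofShift n, List.flatten_flatten]

variable [LinearOrder A]

theorem Wn.ofShift_lt : ∀ (n : ℕ) {x y : Wn (List A) n}, x < y → Wn.ofShift n x < Wn.ofShift n y
  | 0, _, _, h => h
  | n + 1, x, y, h => by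
    show List.Lex (· < ·) (x.toList.map (Wn.ofShift n)) (y.toList.map (Wn.ofShift n))
    induction (h : List.Lex (· < ·) x.toList y.toList) with
    | nil => exact List.Lex.nil
    | cons _ ih => exact List.Lex.cons ih
    | rel hr => exact List.Lex.rel (Wn.ofShift_lt n hr)

theorem sameTypeW_ofShift : ∀ (n : ℕ) {x y : Wn (List A) n}, SameTypeW (List A) n x y →
    (∀ s ∈ flattenW (List A) n x, ∀ t ∈ flattenW (List A) n y, SameTypeW A 1 s t) →
    SameTypeW A (n + 1) (Wn.ofShift n x) (Wn.ofShift n y)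
  | 0, x, y, _, hflat => hflat x (List.mem_singleton_self x) y (List.mem_singleton_self y)
  | n + 1, x, y, hxy, _ => by
    show (x.toList.map (Wn.ofShift n)).head? = (y.toList.map (Wn.ofShift n)).head?
    rw [List.head?_map, List.head?_map, show x.toList.head? = y.toList.head? from hxy]

theorem isRegularW_ofShift : ∀ (n : ℕ) (R : Wn (List A) n), IsRegularW (List A) n R →
    (∀ s ∈ flattenW (List A) n R, IsRegularW A 1 s) →
    (∀ s ∈ flattenW (List A) n R, ∀ t ∈ flattenW (List A) n R, SameTypeW A 1 s t) →
    IsRegularW A (n + 1) (Wn.ofShift n R)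
  | 0, R, _, hreg, _ => hreg R (List.mem_singleton_self R)
  | n + 1, R, hR, hreg, hsame => by
    obtain ⟨hall, hst, x, l, xs, hl, hne, heq, hlt⟩ := hR
    have hsub : ∀ z ∈ R.toList, flattenW (List A) n z ⊆ flattenW (List A) (n + 1) R :=
      fun z hz s hs => List.mem_flatten.2 ⟨_, List.mem_map_of_mem hz, hs⟩
    refine ⟨?_, ?_, Wn.ofShift n x, l, xs.map (Wn.ofShift n), hl, by simpa using hne, ?_, ?_⟩
    · intro z' hz'
      obtain ⟨z, hz, rfl⟩ := List.mem_map.1 hz'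
      exact isRegularW_ofShift n z (hall z hz) (fun s hs => hreg s (hsub z hz hs))
        (fun s hs t ht => hsame s (hsub z hz hs) t (hsub z hz ht))
    · intro z' hz' w' hw'
      obtain ⟨z, hz, rfl⟩ := List.mem_map.1 hz'
      obtain ⟨w, hw, rfl⟩ := List.mem_map.1 hw'
      exact sameTypeW_ofShift n (hst z hz w hw)
        (fun s hs t ht => hsame s (hsub z hz hs) t (hsub w hw ht))
    · show R.toList.map (Wn.ofShift n) = _
      rw [heq, List.map_append, List.map_replicate]
    · intro y' hy'
      obtain ⟨y, hy, rfl⟩ := List.mem_map.1 hy'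
      exact Wn.ofShift_lt n (hlt y hy)

end Shift

theorem full_of_derivation_full_general
    {A G : Type*} [LinearOrder A] [AddCommGroup G]
    (ω : A → G) (X : Set G)
    (S : List A) (T : Wn A 2) (hT : IsDerivation S T)
    (hfull : IsFull (fun s : List A => (s.map ω).sum) X T.toList) :
    IsFull ω X S := by
  obtain ⟨⟨hentries_reg, hentries_type, -⟩, hTS⟩ := hT
  rw [flattenW_two] at hTS
  rcases hfull with hspan | ⟨T', hT', ⟨n, R, hR, rfl⟩, hweight⟩
  · exact Or.inl fun hS =>
      hspan ((hS.spanOf_of_infix hTS).mono (spanOf_subset_spanOf_flatten ω T.toList))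
  · have hsub : ∀ s ∈ flattenW (List A) n R, s ∈ T.toList := fun s hs => hT'.subset hs
    refine Or.inr ⟨(flattenW (List A) n R).flatten, hT'.flatten.trans hTS,
      ⟨n + 1, Wn.ofShift n R, ?_, flattenW_ofShift n R⟩, by rwa [sum_map_flatten]⟩
    exact isRegularW_ofShift n R hR (fun s hs => hentries_reg s (hsub s hs))
      (fun s hs t ht => hentries_type s (hsub s hs) t (hsub t ht))

/-- Let `𝒜 = (A,<,ω,X)` be an alphabet and `ℬ = (W(A),<₁,ω₁,X)` its
shift. If `T` is a derivation of a finite sequence `S` on `A` and `T` is full with respect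
to `ℬ`, then `S` is full with respect to `𝒜`. -/
theorem full_of_derivation_full
    {A G : Type*} [LinearOrder A] [AddCommGroup G]
    (ω : A → G) (X : Set G) (hX : ArithFree X)
    (S : List A) (T : Wn A 2) (hT : IsDerivation S T)
    (hfull : IsFull (fun s : List A => (s.map ω).sum) X T.toList) :
    IsFull ω X S :=
  full_of_derivation_full_general ω X S T hT hfull
end
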